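/- Let X be a mean-zero real random variable with E[e^{θ₀ X}] ≤ M < ∞ for some θ₀ > 0 and E[(X⁻)²] ≤ V < ∞. Then there is a constant K depending only on θ₀, M, V such that for all θ ∈ (0, θ₀/2], log E[e^{θX}] ≤ (1/2) K θ². -/

import Mathlib

/-!
Write `y⁻ = max (-y) 0`. For `0 < θ ≤ θ₀ / 2` one has the pointwise bound
`exp (θ y) ≤ 1 + θ y + θ² (y⁻² + (8 / θ₀²) exp (θ₀ y))`: for `y < 0` this is the quadratic
Taylor bound of `exp` on `(-∞, 0]`, and for `y ≥ 0` the remainder `θ² y² exp (θ y)` is absorbed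
into `exp (θ₀ y)` because `θ ≤ θ₀ / 2` leaves a factor `exp (θ₀ y / 2) ≥ (θ₀ y)² / 8` to spare.
Integrating, the mean-zero hypothesis kills the linear term, so
`E[exp (θ X)] ≤ 1 + θ² (V + 8 M / θ₀²)`, and `log x ≤ x - 1` finishes.
-/

open MeasureTheory

namespace Real

lemma exp_le_one_add_add_sq_of_nonpos {t : ℝ} (ht : t ≤ 0) : exp t ≤ 1 + t + t ^ 2 := by
  have h_one : 1 ≤ (1 + t + t ^ 2) * exp (-t) := calc
    (1 : ℝ) ≤ (1 + t + t ^ 2) * (-t + 1) := by nlinarith [sq_nonneg t]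
    _ ≤ (1 + t + t ^ 2) * exp (-t) := by
      gcongr
      · nlinarith [sq_nonneg (t + 1)]
      · exact add_one_le_exp (-t)
  rw [exp_neg] at h_one
  have := exp_pos t
  rwa [← div_eq_mul_inv, le_div_iff₀ this, one_mul] at h_one

lemma exp_le_one_add_add_sq_mul_exp_of_nonneg {t : ℝ} (ht : 0 ≤ t) :
    exp t ≤ 1 + t + t ^ 2 * exp t := by
  have h_inv : exp t * exp (-t) = 1 := by rw [← exp_add, add_neg_cancel, exp_zero]
  have h_sub : exp t - 1 ≤ t * exp t := by nlinarith [add_one_le_exp (-t), exp_pos t]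
  nlinarith

lemma sq_mul_exp_mul_le_exp_mul {θ θ₀ y : ℝ} (hθ₀ : 0 < θ₀) (hθ : θ ≤ θ₀ / 2) (hy : 0 ≤ y) :
    y ^ 2 * exp (θ * y) ≤ 8 / θ₀ ^ 2 * exp (θ₀ * y) := by
  have h_sq : y ^ 2 ≤ 8 / θ₀ ^ 2 * exp (θ₀ / 2 * y) := by
    have := pow_div_factorial_le_exp (θ₀ / 2 * y) (by positivity) 2
    rw [div_mul_eq_mul_div, le_div_iff₀ (by positivity)]
    norm_num [Nat.factorial] at this
    nlinarith
  calc y ^ 2 * exp (θ * y)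
      ≤ 8 / θ₀ ^ 2 * exp (θ₀ / 2 * y) * exp (θ₀ / 2 * y) := by
        gcongr
    _ = 8 / θ₀ ^ 2 * exp (θ₀ * y) := by rw [mul_assoc, ← exp_add, ← add_mul, add_halves]

lemma exp_mul_le_one_add_add_sq_mul {θ θ₀ : ℝ} (hθ : 0 < θ) (hθθ₀ : θ ≤ θ₀ / 2) (y : ℝ) :
    exp (θ * y) ≤ 1 + θ * y + θ ^ 2 * (max (-y) 0 ^ 2 + 8 / θ₀ ^ 2 * exp (θ₀ * y)) := by
  have h_exp_term : 0 ≤ θ ^ 2 * (8 / θ₀ ^ 2 * exp (θ₀ * y)) := by positivity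
  rcases lt_or_ge y 0 with hy | hy
  · have := exp_le_one_add_add_sq_of_nonpos (mul_nonpos_of_nonneg_of_nonpos hθ.le hy.le)
    rw [max_eq_left (by linarith)]
    linarith [show (θ * y) ^ 2 = θ ^ 2 * (-y) ^ 2 by ring]
  · have h_rem := sq_mul_exp_mul_le_exp_mul (by linarith) hθθ₀ hy
    calc exp (θ * y) ≤ 1 + θ * y + θ ^ 2 * (y ^ 2 * exp (θ * y)) := by
          linarith [exp_le_one_add_add_sq_mul_exp_of_nonneg (mul_nonneg hθ.le hy)]
      _ ≤ 1 + θ * y + θ ^ 2 * (max (-y) 0 ^ 2 + 8 / θ₀ ^ 2 * exp (θ₀ * y)) := by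
          rw [max_eq_right (by linarith)]
          gcongr
          linarith

end Real

open Real in
lemma integral_exp_mul_le {μ : Measure ℝ} [IsProbabilityMeasure μ] {θ θ₀ : ℝ}
    (h_int : Integrable (fun y : ℝ => y) μ) (h_mean : ∫ y, y ∂μ = 0)
    (h_int_exp : Integrable (fun y : ℝ => exp (θ₀ * y)) μ)
    (h_int_neg : Integrable (fun y : ℝ => max (-y) 0 ^ 2) μ)
    (hθ : 0 < θ) (hθθ₀ : θ ≤ θ₀ / 2) :
    Integrable (fun y : ℝ => exp (θ * y)) μ ∧
      ∫ y, exp (θ * y) ∂μ ≤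
        1 + θ ^ 2 * (∫ y, max (-y) 0 ^ 2 ∂μ + 8 / θ₀ ^ 2 * ∫ y, exp (θ₀ * y) ∂μ) := by
  have h_lin : Integrable (fun y : ℝ => 1 + θ * y) μ := (integrable_const 1).add (h_int.const_mul θ)
  have h_quad : Integrable
      (fun y : ℝ => θ ^ 2 * (max (-y) 0 ^ 2 + 8 / θ₀ ^ 2 * exp (θ₀ * y))) μ :=
    (h_int_neg.add (h_int_exp.const_mul _)).const_mul _
  have h_bound := exp_mul_le_one_add_add_sq_mul hθ hθθ₀
  have h_int_θ : Integrable (fun y : ℝ => exp (θ * y)) μ :=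
    (h_lin.add h_quad).mono' (by fun_prop) (.of_forall fun y => by
      rw [norm_of_nonneg (exp_pos _).le]
      exact h_bound y)
  refine ⟨h_int_θ, ?_⟩
  calc ∫ y, exp (θ * y) ∂μ
      ≤ ∫ y, (1 + θ * y + θ ^ 2 * (max (-y) 0 ^ 2 + 8 / θ₀ ^ 2 * exp (θ₀ * y))) ∂μ :=
        integral_mono h_int_θ (h_lin.add h_quad) h_bound
    _ = _ := by
        rw [integral_add h_lin h_quad, integral_add (integrable_const 1) (h_int.const_mul θ),
          integral_const_mul, integral_const_mul, h_mean, integral_add h_int_neg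
          (h_int_exp.const_mul _), integral_const_mul, integral_const, probReal_univ,
          smul_eq_mul, mul_one, mul_zero, add_zero]

theorem logMGF_quadratic_bound_general (θ₀ M V : ℝ) :
    ∃ K : ℝ, ∀ μ : Measure ℝ, IsProbabilityMeasure μ →
      Integrable (fun y : ℝ => y) μ → (∫ y, y ∂μ = 0) →
      Integrable (fun y : ℝ => Real.exp (θ₀ * y)) μ →
      (∫ y, Real.exp (θ₀ * y) ∂μ ≤ M) →
      Integrable (fun y : ℝ => (max (-y) 0) ^ 2) μ →
      (∫ y, (max (-y) 0) ^ 2 ∂μ ≤ V) →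
      ∀ θ : ℝ, 0 < θ → θ ≤ θ₀ / 2 →
        Real.log (∫ y, Real.exp (θ * y) ∂μ) ≤ K * θ ^ 2 / 2 := by
  refine ⟨2 * (V + 8 / θ₀ ^ 2 * M), ?_⟩
  intro μ _ h_int h_mean h_int_exp h_M h_int_neg h_V θ hθ hθθ₀
  obtain ⟨h_int_θ, h_le⟩ := integral_exp_mul_le h_int h_mean h_int_exp h_int_neg hθ hθθ₀
  have h_CM : 8 / θ₀ ^ 2 * ∫ y, Real.exp (θ₀ * y) ∂μ ≤ 8 / θ₀ ^ 2 * M := by gcongr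
  have h_log := Real.log_le_sub_one_of_pos (integral_exp_pos h_int_θ)
  nlinarith [sq_nonneg θ]

/-- Key second-derivative estimate for the log-moment-generating function: if `X`
has mean zero, `E[e^{θ₀ X}] ≤ M` and `E[(X⁻)²] ≤ V`, then there is a constant `K`
depending only on `θ₀, M, V` with `log E[e^{θ X}] ≤ K θ² / 2` for `θ ∈ (0, θ₀/2]`. -/
theorem logMGF_quadratic_bound (θ₀ M V : ℝ) (hθ₀ : 0 < θ₀) :
    ∃ K : ℝ, ∀ μ : Measure ℝ, IsProbabilityMeasure μ →
      Integrable (fun y : ℝ => y) μ → (∫ y, y ∂μ = 0) →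
      Integrable (fun y : ℝ => Real.exp (θ₀ * y)) μ →
      (∫ y, Real.exp (θ₀ * y) ∂μ ≤ M) →
      Integrable (fun y : ℝ => (max (-y) 0) ^ 2) μ →
      (∫ y, (max (-y) 0) ^ 2 ∂μ ≤ V) →
      ∀ θ : ℝ, 0 < θ → θ ≤ θ₀ / 2 →
        Real.log (∫ y, Real.exp (θ * y) ∂μ) ≤ K * θ ^ 2 / 2 :=
  logMGF_quadratic_bound_general θ₀ M V
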